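/- Let A = A_1 × ... × A_m with A_i = A_{m-i+1}. If H is a prefix-free, symmetric set of partial points (symmetric meaning ∪H = ∪H_rev) with |H|² ≤ |A|/4, then min(|∪H|, |A| - |∪H|) ≤ |H|² + O(|H|⁴/|A|). -/

import Mathlib

/-!
Every point of `∪H = ∪H_rev` lies in `C_p ∩ R_q` for some `p, q ∈ H`, where `C_p` is the cube
fixing the first `|p|` coordinates and `R_q` the reversed cube fixing the last `|q|`. If
`|p| + |q| ≤ m` these constrain disjoint sets of coordinates, so
`|A| · |C_p ∩ R_q| ≤ |C_p| · |R_q|`; otherwise `C_p ∩ R_q` is at most a single point.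
Prefix-freeness makes both families of cubes disjoint, so `∑ |C_p| = ∑ |R_q| = |∪H| =: S`, and
summing over pairs gives `S (|A| - S) ≤ |A| |H|²`. With `y = min(S, |A| - S) ≤ |A|/2` this
forces `y ≤ 2|H|²`, hence `y |A| ≤ |A| |H|² + y² ≤ |A| |H|² + 4|H|⁴`.
-/

/-- A partial point of the product set `A 1 × ⋯ × A m`: a tuple of some length `ℓ ≤ m`. -/
abbrev PPoint (α : Type) (m : ℕ) := (ℓ : Fin (m + 1)) × (Fin ℓ.val → α)

variable {α : Type} {m : ℕ}

/-- The subcube of `A = A 1 × ⋯ × A m` indexed by a partial point `p`: all points of `A`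
whose first `|p|` coordinates agree with `p`. -/
def cubeOf [DecidableEq α] (A : Fin m → Finset α) (p : PPoint α m) : Finset (Fin m → α) :=
  (Fintype.piFinset A).filter
    (fun x => ∀ j : Fin p.1.val, x (Fin.castLE (Nat.lt_succ_iff.mp p.1.isLt) j) = p.2 j)

/-- The reversed subcube indexed by a partial point `p` of length `k`: all points of `A`
whose last `k` coordinates equal the reversal of `p`. -/
def cubeRevOf [DecidableEq α] (A : Fin m → Finset α) (p : PPoint α m) : Finset (Fin m → α) :=
  (Fintype.piFinset A).filter
    (fun x => ∀ j : Fin p.1.val,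
      x ⟨m - 1 - j.val, by have h1 := j.isLt; have h2 := p.1.isLt; omega⟩ = p.2 j)

/-- `p` is a prefix of `q`. -/
def IsPrefixP (p q : PPoint α m) : Prop :=
  ∃ h : p.1.val ≤ q.1.val, ∀ j : Fin p.1.val, q.2 (Fin.castLE h j) = p.2 j

/-- A set of partial points is prefix-free if none is a proper prefix of another. -/
def PrefixFreeP (H : Finset (PPoint α m)) : Prop :=
  ∀ p ∈ H, ∀ q ∈ H, IsPrefixP p q → p = q

/-- The union `∪H` of the subcubes indexed by a set of partial points. -/
def unionCube [DecidableEq α] (A : Fin m → Finset α) (H : Finset (PPoint α m)) :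
    Finset (Fin m → α) :=
  H.biUnion (cubeOf A)

/-- The union `∪H_rev` of the reversed subcubes indexed by a set of partial points. -/
def unionCubeRev [DecidableEq α] (A : Fin m → Finset α) (H : Finset (PPoint α m)) :
    Finset (Fin m → α) :=
  H.biUnion (cubeRevOf A)

open Finset

section Splice

variable {ι β : Type*} [Fintype ι] [DecidableEq ι] [DecidableEq β]

theorem card_piFinset_mul_card_filter_inter_filter_le (A : ι → Finset β) (s : Set ι)
    [DecidablePred (· ∈ s)] (P Q : (ι → β) → Prop) [DecidablePred P] [DecidablePred Q]
    (hP : ∀ x y, (∀ i ∈ s, x i = y i) → P x → P y)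
    (hQ : ∀ x y, (∀ i ∉ s, x i = y i) → Q x → Q y) :
    #(Fintype.piFinset A) * #((Fintype.piFinset A).filter P ∩ (Fintype.piFinset A).filter Q) ≤
      #((Fintype.piFinset A).filter P) * #((Fintype.piFinset A).filter Q) := by
  -- Splicing `z` and `y` along `s` both ways injects `(X_P ∩ X_Q) × X` into `X_P × X_Q`.
  rw [mul_comm, ← card_product, ← card_product]
  refine card_le_card_of_injOn (fun zy => (s.piecewise zy.1 zy.2, s.piecewise zy.2 zy.1))
    ?_ ?_
  · rintro ⟨z, y⟩ hzy
    simp only [coe_product, Set.mem_prod, mem_coe, mem_inter, mem_filter,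
      Fintype.mem_piFinset] at hzy ⊢
    obtain ⟨⟨⟨hzA, hzP⟩, -, hzQ⟩, hyA⟩ := hzy
    have hA : ∀ x y : ι → β, (∀ i, x i ∈ A i) → (∀ i, y i ∈ A i) →
        ∀ i, s.piecewise x y i ∈ A i :=
      fun x y hx hy i => by by_cases hi : i ∈ s <;> simp [Set.piecewise, hi, hx i, hy i]
    refine ⟨⟨hA z y hzA hyA, hP z _ (fun i hi => ?_) hzP⟩,
      hA y z hyA hzA, hQ z _ (fun i hi => ?_) hzQ⟩
    · exact (Set.piecewise_eq_of_mem s z y hi).symm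
    · exact (Set.piecewise_eq_of_notMem s y z hi).symm
  · rintro ⟨z, y⟩ - ⟨z', y'⟩ - h
    simp only [Prod.mk.injEq] at h
    obtain ⟨h₁, h₂⟩ := h
    refine Prod.ext (funext fun i => ?_) (funext fun i => ?_) <;> by_cases hi : i ∈ s
    · simpa [hi] using congrFun h₁ i
    · simpa [hi] using congrFun h₂ i
    · simpa [hi] using congrFun h₂ i
    · simpa [hi] using congrFun h₁ i

end Splice

section Cubes

variable [DecidableEq α] (A : Fin m → Finset α)

theorem card_piFinset_mul_card_cubeOf_inter_cubeRevOf_le (p q : PPoint α m)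
    (hpq : p.1.val + q.1.val ≤ m) :
    #(Fintype.piFinset A) * #(cubeOf A p ∩ cubeRevOf A q) ≤
      #(cubeOf A p) * #(cubeRevOf A q) := by
  refine card_piFinset_mul_card_filter_inter_filter_le A {i | i.val < p.1.val} _ _
    (fun x y hxy hx j => ?_) (fun x y hxy hx j => ?_)
  · exact (hxy _ j.isLt).symm.trans (hx j)
  · refine (hxy _ ?_).symm.trans (hx j)
    show ¬ m - 1 - j.val < p.1.val
    omega

theorem card_cubeOf_inter_cubeRevOf_le_one (p q : PPoint α m) (hpq : m < p.1.val + q.1.val) :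
    #(cubeOf A p ∩ cubeRevOf A q) ≤ 1 := by
  rw [card_le_one]
  intro x hx y hy
  simp only [mem_inter, cubeOf, cubeRevOf, mem_filter] at hx hy
  funext i
  by_cases hi : i.val < p.1.val
  · exact (hx.1.2 ⟨i, hi⟩).trans (hy.1.2 ⟨i, hi⟩).symm
  · have hj : m - 1 - i.val < q.1.val := by omega
    have hi_rev : (⟨m - 1 - (m - 1 - i.val), by omega⟩ : Fin m) = i := Fin.ext (by simp; omega)
    have hxi := hx.2.2 ⟨_, hj⟩
    have hyi := hy.2.2 ⟨_, hj⟩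
    rw [hi_rev] at hxi hyi
    exact hxi.trans hyi.symm

theorem card_piFinset_mul_card_cubeOf_inter_cubeRevOf_le_add (p q : PPoint α m) :
    #(Fintype.piFinset A) * #(cubeOf A p ∩ cubeRevOf A q) ≤
      #(cubeOf A p) * #(cubeRevOf A q) + #(Fintype.piFinset A) := by
  rcases le_or_gt (p.1.val + q.1.val) m with h | h
  · exact (card_piFinset_mul_card_cubeOf_inter_cubeRevOf_le A p q h).trans (Nat.le_add_right _ _)
  · calc #(Fintype.piFinset A) * #(cubeOf A p ∩ cubeRevOf A q)
        ≤ #(Fintype.piFinset A) * 1 :=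
          Nat.mul_le_mul_left _ (card_cubeOf_inter_cubeRevOf_le_one A p q h)
      _ ≤ _ := by rw [mul_one]; exact Nat.le_add_left _ _

theorem isPrefixP_of_mem_cubeOf {p q : PPoint α m} {x : Fin m → α} (hle : p.1.val ≤ q.1.val)
    (hp : x ∈ cubeOf A p) (hq : x ∈ cubeOf A q) : IsPrefixP p q :=
  ⟨hle, fun j => ((mem_filter.1 hq).2 (Fin.castLE hle j)).symm.trans ((mem_filter.1 hp).2 j)⟩

theorem isPrefixP_of_mem_cubeRevOf {p q : PPoint α m} {x : Fin m → α}
    (hle : p.1.val ≤ q.1.val)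
    (hp : x ∈ cubeRevOf A p) (hq : x ∈ cubeRevOf A q) : IsPrefixP p q :=
  ⟨hle, fun j => ((mem_filter.1 hq).2 (Fin.castLE hle j)).symm.trans ((mem_filter.1 hp).2 j)⟩

end Cubes

theorem PrefixFreeP.pairwiseDisjoint {β : Type} {H : Finset (PPoint α m)} (hH : PrefixFreeP H)
    {c : PPoint α m → Finset β}
    (hc : ∀ p q x, p.1.val ≤ q.1.val → x ∈ c p → x ∈ c q → IsPrefixP p q) :
    (H : Set (PPoint α m)).PairwiseDisjoint c := by
  intro p hp q hq hne
  refine disjoint_left.2 fun x hxp hxq => hne ?_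
  rcases le_total p.1.val q.1.val with hle | hle
  · exact hH p hp q hq (hc p q x hle hxp hxq)
  · exact (hH q hq p hp (hc q p x hle hxq hxp)).symm

section UnionCube

variable [DecidableEq α] (A : Fin m → Finset α) (H : Finset (PPoint α m))

theorem unionCube_subset_piFinset : unionCube A H ⊆ Fintype.piFinset A :=
  biUnion_subset.2 fun _ _ => filter_subset _ _

theorem unionCube_subset_biUnion_inter (hsym : unionCube A H = unionCubeRev A H) :
    unionCube A H ⊆ (H ×ˢ H).biUnion fun pq => cubeOf A pq.1 ∩ cubeRevOf A pq.2 := by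
  intro x hx
  obtain ⟨p, hp, hxp⟩ := mem_biUnion.1 hx
  obtain ⟨q, hq, hxq⟩ := mem_biUnion.1 (hsym ▸ hx : x ∈ unionCubeRev A H)
  exact mem_biUnion.2 ⟨(p, q), mem_product.2 ⟨hp, hq⟩, mem_inter.2 ⟨hxp, hxq⟩⟩

variable {A H}

theorem PrefixFreeP.card_unionCube (hH : PrefixFreeP H) :
    #(unionCube A H) = ∑ p ∈ H, #(cubeOf A p) :=
  card_biUnion (hH.pairwiseDisjoint fun _ _ _ hle => isPrefixP_of_mem_cubeOf A hle)

theorem PrefixFreeP.card_unionCubeRev (hH : PrefixFreeP H) :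
    #(unionCubeRev A H) = ∑ p ∈ H, #(cubeRevOf A p) :=
  card_biUnion (hH.pairwiseDisjoint fun _ _ _ hle => isPrefixP_of_mem_cubeRevOf A hle)

theorem card_piFinset_mul_card_unionCube_le (hH : PrefixFreeP H)
    (hsym : unionCube A H = unionCubeRev A H) :
    #(Fintype.piFinset A) * #(unionCube A H) ≤
      #(unionCube A H) * #(unionCube A H) + #(Fintype.piFinset A) * #H ^ 2 := by
  set N := #(Fintype.piFinset A)
  calc N * #(unionCube A H)
      ≤ N * ∑ pq ∈ H ×ˢ H, #(cubeOf A pq.1 ∩ cubeRevOf A pq.2) :=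
        Nat.mul_le_mul_left _
          ((card_le_card (unionCube_subset_biUnion_inter A H hsym)).trans card_biUnion_le)
    _ = ∑ pq ∈ H ×ˢ H, N * #(cubeOf A pq.1 ∩ cubeRevOf A pq.2) := mul_sum _ _ _
    _ ≤ ∑ pq ∈ H ×ˢ H, (#(cubeOf A pq.1) * #(cubeRevOf A pq.2) + N) :=
        sum_le_sum fun pq _ => card_piFinset_mul_card_cubeOf_inter_cubeRevOf_le_add A pq.1 pq.2
    _ = (∑ p ∈ H, #(cubeOf A p)) * (∑ q ∈ H, #(cubeRevOf A q)) + #(H ×ˢ H) * N := by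
        rw [sum_add_distrib, sum_const, smul_eq_mul, sum_mul_sum, sum_product]
    _ = #(unionCube A H) * #(unionCube A H) + N * #H ^ 2 := by
        rw [← hH.card_unionCube, ← hH.card_unionCubeRev, ← hsym, card_product]
        ring

end UnionCube

theorem min_le_add_sq_div_of_mul_sub_le {s n t : ℝ} (hs : 0 ≤ s) (hsn : s ≤ n) (ht : 0 ≤ t)
    (h : s * (n - s) ≤ n * t) : min s (n - s) ≤ t + 4 * t ^ 2 / n := by
  rcases (hs.trans hsn).eq_or_lt with rfl | hn
  · simpa [le_antisymm hsn hs] using ht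
  have hy_mul : min s (n - s) * (n - min s (n - s)) = s * (n - s) := by
    rcases min_cases s (n - s) with ⟨hmin, -⟩ | ⟨hmin, -⟩
    · rw [hmin]
    · rw [hmin]; ring
  have hy : 0 ≤ min s (n - s) := le_min hs (sub_nonneg.2 hsn)
  have hy_half : 2 * min s (n - s) ≤ n := by
    linarith [min_le_left s (n - s), min_le_right s (n - s)]
  generalize min s (n - s) = y at *
  have hy_le : y ≤ 2 * t := by nlinarith
  rw [← sub_le_iff_le_add', le_div_iff₀ hn]
  nlinarith

/-- If `H` is a prefix-free symmetric set of partial points (`∪H = ∪H_rev`) with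
`|H|² ≤ |A|/4`, then `min(|∪H|, |A| - |∪H|) ≤ |H|² + O(|H|⁴/|A|)`. -/
theorem stmt14 :
    ∃ Cst : ℝ, 0 < Cst ∧
      ∀ (α : Type) [DecidableEq α] (m : ℕ) (A : Fin m → Finset α),
        (∀ i, A i = A (Fin.rev i)) →
        ∀ H : Finset (PPoint α m), PrefixFreeP H →
          unionCube A H = unionCubeRev A H →
          4 * H.card ^ 2 ≤ (Fintype.piFinset A).card →
          min ((unionCube A H).card : ℝ)
              (((Fintype.piFinset A).card : ℝ) - (unionCube A H).card) ≤
            (H.card : ℝ) ^ 2 + Cst * (H.card : ℝ) ^ 4 / (Fintype.piFinset A).card := by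
  refine ⟨4, four_pos, fun α _ m A _ H hH hsym _ => ?_⟩
  have hkey : (#(unionCube A H) : ℝ) * (#(Fintype.piFinset A) - #(unionCube A H)) ≤
      #(Fintype.piFinset A) * (#H : ℝ) ^ 2 := by
    have := card_piFinset_mul_card_unionCube_le hH hsym
    rw [mul_sub, sub_le_iff_le_add, mul_comm]
    exact_mod_cast this.trans_eq (add_comm _ _)
  have := min_le_add_sq_div_of_mul_sub_le (Nat.cast_nonneg _)
    (Nat.cast_le.2 (card_le_card (unionCube_subset_piFinset A H))) (sq_nonneg _) hkey
  rwa [← pow_mul] at this
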